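/- Let D be a skew-symmetric derivation of the diamond Lie algebra g_4 and let ḡ = g_4 ⊕ ℂe ⊕ ℂf be the double extension of g_4 by D. Then ḡ is decomposable: its center Z(ḡ) is not totally isotropic with respect to the extended bilinear form B̄ (there exist central elements u and f with B̄(u,f) ≠ 0), and hence ḡ is the orthogonal direct sum of two nonzero ideals. -/

import Mathlib

/-- The bracket of the double extension `g ⊕ ℂe ⊕ ℂf` of a quadratic Lie algebra
`(g, B)` by a skew-symmetric derivation `D`: an element `(x, a, c)` represents
`x + a·e + c·f`, and
`[x + a·e + c·f, y + a'·e + c'·f] = [x,y]_g + a·D(y) - a'·D(x) + B(D(x), y)·f`. -/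
def deBracket (h : Type) [LieRing h] [LieAlgebra ℂ h]
    (B : LinearMap.BilinForm ℂ h) (D : h →ₗ[ℂ] h) :
    (h × ℂ × ℂ) → (h × ℂ × ℂ) → (h × ℂ × ℂ) :=
  fun u v => (⁅u.1, v.1⁆ + u.2.1 • D v.1 - v.2.1 • D u.1, 0, B (D u.1) v.1)

/-- The bilinear form `B̄` of the double extension: it extends `B`, satisfies
`B̄(e, f) = 1` and vanishes on all other pairs involving `e` and `f`. -/
def deForm (h : Type) [AddCommGroup h] [Module ℂ h]
    (B : LinearMap.BilinForm ℂ h) : (h × ℂ × ℂ) → (h × ℂ × ℂ) → ℂ :=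
  fun u v => B u.1 v.1 + u.2.1 * v.2.2 + u.2.2 * v.2.1


/-!
A skew-symmetric derivation `D` of `g₄` is inner. Indeed `ω(x, y) = B(D x, y)` is alternating and,
`B` being invariant, satisfies `ω([x,y], z) = ω(x, [y,z]) - ω(y, [x,z])`; on the triples
`(X,P,Q)`, `(X,P,Z)`, `(X,Q,Z)` this gives `ω(·, Z) = 0`, and what remains of `ω` is
`(x, y) ↦ B(w₀, [x,y])` for `w₀ = ω(P,Q) X - ω(X,Q) P + ω(X,P) Q`, so `D = ad w₀`.

For an inner derivation `D = ad w₀` the elements `e - w₀` and `f` are central with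
`B̄(e - w₀, f) = 1`, and `ḡ` is the orthogonal sum of the ideals `span(e - w₀, f)` and
`{y + B(w₀, y) f | y ∈ g}`.
-/

open LinearMap (BilinForm)

namespace LinearMap.BilinForm

variable {R L : Type*} [CommRing R] [LieRing L] [LieAlgebra R L] {B : BilinForm R L}

lemma lieInvariant_of_basis {ι : Type*} (b : Module.Basis ι R L)
    (h : ∀ i j k, B ⁅b i, b j⁆ (b k) = -B (b j) ⁅b i, b k⁆) : B.lieInvariant L := by
  rw [lieInvariant_iff, LieModule.mem_maxTrivSubmodule]
  suffices (LieModule.toEnd R L (BilinForm R L) : L →ₗ[R] Module.End R (BilinForm R L)).flip B = 0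
    from fun x => LinearMap.congr_fun this x
  refine b.ext fun i => ext_basis b fun j k => ?_
  simp [h]

namespace lieInvariant

lemma apply_lie (hB : B.lieInvariant L) (x y z : L) : B ⁅x, y⁆ z = B x ⁅y, z⁆ := by
  rw [← lie_skew, map_neg, LinearMap.neg_apply, hB, neg_neg]

lemma apply_lie_self (hB : B.lieInvariant L) (x y : L) : B x ⁅x, y⁆ = 0 := by
  rw [← hB.apply_lie, lie_self, map_zero, LinearMap.zero_apply]

lemma lie_apply_self (hB : B.lieInvariant L) (x y : L) : B ⁅x, y⁆ x = 0 := by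
  rw [hB.apply_lie, ← lie_skew, map_neg, hB.apply_lie_self, neg_zero]

lemma apply_derivation_lie (hB : B.lieInvariant L) {D : L →ₗ[R] L}
    (hD : ∀ x y, D ⁅x, y⁆ = ⁅D x, y⁆ + ⁅x, D y⁆) (x y z : L) :
    B (D ⁅x, y⁆) z = B (D x) ⁅y, z⁆ - B (D y) ⁅x, z⁆ := by
  rw [hD, map_add, LinearMap.add_apply, ← lie_skew (D x), map_neg, LinearMap.neg_apply, hB, hB,
    neg_neg, sub_eq_add_neg]

lemma eq_lie_of_basis {ι : Type*} (hB : B.lieInvariant L) (hnd : B.Nondegenerate)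
    (b : Module.Basis ι R L) {D : L →ₗ[R] L} {w₀ : L}
    (h : ∀ i j, B (D (b i)) (b j) = B w₀ ⁅b i, b j⁆) (x : L) : D x = ⁅w₀, x⁆ := by
  have hD : D = LieAlgebra.ad R L w₀ := b.ext fun i =>
    LinearMap.ker_eq_bot.mp hnd.ker_eq_bot <| b.ext fun j => by simp [h, hB.apply_lie]
  simp [hD]

end lieInvariant

end LinearMap.BilinForm

section InnerDoubleExtension

variable {h : Type} [LieRing h] [LieAlgebra ℂ h] {B : BilinForm ℂ h} {D : h →ₗ[ℂ] h} {w₀ : h}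

/-- `(a, c) ↦ a (e - w₀) + c f`. -/
def centralPlane (w₀ : h) : ℂ × ℂ →ₗ[ℂ] h × ℂ × ℂ :=
  ((LinearMap.fst ℂ ℂ ℂ).smulRight (-w₀)).prod LinearMap.id

/-- `y ↦ y + B(w₀, y) f`. -/
def formGraph (B : BilinForm ℂ h) (w₀ : h) : h →ₗ[ℂ] h × ℂ × ℂ :=
  LinearMap.id.prod ((0 : h →ₗ[ℂ] ℂ).prod (B w₀))

@[simp]
lemma centralPlane_apply (p : ℂ × ℂ) : centralPlane w₀ p = (p.1 • -w₀, p) := rfl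

@[simp]
lemma formGraph_apply (y : h) : formGraph B w₀ y = (y, 0, B w₀ y) := rfl

lemma deBracket_centralPlane_left (hD : ∀ x, D x = ⁅w₀, x⁆) (p : ℂ × ℂ) (w : h × ℂ × ℂ) :
    deBracket h B D (centralPlane w₀ p) w = 0 := by
  simp [deBracket, hD, Prod.ext_iff]

lemma deBracket_centralPlane_right (hB : B.lieInvariant h) (hD : ∀ x, D x = ⁅w₀, x⁆)
    (p : ℂ × ℂ) (w : h × ℂ × ℂ) : deBracket h B D w (centralPlane w₀ p) = 0 := by
  simp only [deBracket, centralPlane_apply, smul_neg, lie_neg, lie_smul, hD, lie_self, smul_zero,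
    neg_zero, add_zero, map_neg, map_smul, hB.lie_apply_self, smul_eq_mul, mul_zero, Prod.ext_iff,
    Prod.fst_zero, Prod.snd_zero, and_self, and_true]
  rw [← lie_skew w₀ w.1]
  module

lemma deBracket_formGraph (hB : B.lieInvariant h) (hD : ∀ x, D x = ⁅w₀, x⁆)
    (w : h × ℂ × ℂ) (y : h) :
    deBracket h B D w (formGraph B w₀ y) = formGraph B w₀ (⁅w.1, y⁆ + w.2.1 • D y) := by
  simp [deBracket, hD, hB.apply_lie, hB.apply_lie_self]

lemma deForm_centralPlane_formGraph (p : ℂ × ℂ) (y : h) :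
    deForm h B (centralPlane w₀ p) (formGraph B w₀ y) = 0 := by
  simp [deForm]

lemma isCompl_range_centralPlane_formGraph :
    IsCompl (LinearMap.range (centralPlane w₀)) (LinearMap.range (formGraph B w₀)) := by
  constructor
  · rw [Submodule.disjoint_def]
    rintro _ ⟨p, rfl⟩ ⟨y, hy⟩
    simp only [centralPlane_apply, formGraph_apply, Prod.ext_iff] at hy
    obtain ⟨rfl, hp₁, hp₂⟩ := hy
    simp [← hp₁, ← hp₂, Prod.ext_iff]
  · rw [Submodule.codisjoint_iff_exists_add_eq]
    intro z
    let y := z.1 + z.2.1 • w₀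
    exact ⟨_, _, ⟨(z.2.1, z.2.2 - B w₀ y), rfl⟩, ⟨y, rfl⟩, by simp [y]⟩

theorem deBracket_decomposable_of_inner [Nontrivial h] (hB : B.lieInvariant h)
    (hD : ∀ x, D x = ⁅w₀, x⁆) :
    (∃ u v : h × ℂ × ℂ,
      (∀ w : h × ℂ × ℂ, deBracket h B D u w = 0 ∧ deBracket h B D w u = 0) ∧
      (∀ w : h × ℂ × ℂ, deBracket h B D v w = 0 ∧ deBracket h B D w v = 0) ∧
      deForm h B u v ≠ 0) ∧
    (∃ I J : Submodule ℂ (h × ℂ × ℂ),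
      I ≠ ⊥ ∧ J ≠ ⊥ ∧
      (∀ w : h × ℂ × ℂ, ∀ x ∈ I, deBracket h B D w x ∈ I) ∧
      (∀ w : h × ℂ × ℂ, ∀ x ∈ J, deBracket h B D w x ∈ J) ∧
      (∀ x ∈ I, ∀ y ∈ J, deForm h B x y = 0) ∧
      I ⊓ J = ⊥ ∧ I ⊔ J = ⊤) := by
  have hcentral (p : ℂ × ℂ) (w : h × ℂ × ℂ) :
      deBracket h B D (centralPlane w₀ p) w = 0 ∧ deBracket h B D w (centralPlane w₀ p) = 0 :=
    ⟨deBracket_centralPlane_left hD p w, deBracket_centralPlane_right hB hD p w⟩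
  have hcompl := isCompl_range_centralPlane_formGraph (w₀ := w₀) (B := B)
  refine ⟨⟨centralPlane w₀ (1, 0), centralPlane w₀ (0, 1), hcentral _, hcentral _,
    by simp [deForm]⟩, ⟨_, _, ?_, ?_, ?_, ?_, ?_, hcompl.inf_eq_bot, hcompl.sup_eq_top⟩⟩
  · rw [Ne, LinearMap.range_eq_bot]
    exact ne_of_apply_ne (· (0, 1)) (by simp)
  · obtain ⟨y, hy⟩ := exists_ne (0 : h)
    rw [Ne, LinearMap.range_eq_bot]
    exact ne_of_apply_ne (fun φ => (φ y).1) (by simpa using hy)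
  · rintro w _ ⟨p, rfl⟩
    rw [deBracket_centralPlane_right hB hD]
    exact zero_mem _
  · rintro w _ ⟨y, rfl⟩
    exact ⟨_, (deBracket_formGraph hB hD w y).symm⟩
  · rintro _ ⟨p, rfl⟩ _ ⟨y, rfl⟩
    exact deForm_centralPlane_formGraph p y

end InnerDoubleExtension

section Diamond

variable {g : Type} [LieRing g] [LieAlgebra ℂ g] {B : BilinForm ℂ g} {b : Module.Basis (Fin 4) ℂ g}

def diamondForm : Matrix (Fin 4) (Fin 4) ℂ :=
  !![0, 0, 0, 1; 0, 0, 1, 0; 0, 1, 0, 0; 1, 0, 0, 0]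

def diamondBracket (v : Fin 4 → g) : Fin 4 → Fin 4 → g :=
  ![![0, v 1, -(v 2), 0],
    ![-(v 1), 0, v 3, 0],
    ![v 2, -(v 3), 0, 0],
    ![0, 0, 0, 0]]

lemma diamond_isSymm (hB : ∀ i j, B (b i) (b j) = diamondForm i j) : B.IsSymm := by
  rw [LinearMap.BilinForm.isSymm_iff_flip]
  refine LinearMap.BilinForm.ext_basis b fun i j => ?_
  fin_cases i <;> fin_cases j <;> simp [hB, diamondForm]

lemma diamond_nondegenerate (hB : ∀ i j, B (b i) (b j) = diamondForm i j) :
    B.Nondegenerate := by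
  rw [LinearMap.BilinForm.nondegenerate_iff_det_ne_zero b,
    show LinearMap.BilinForm.toMatrix b B = diamondForm from
      Matrix.ext fun i j => by rw [LinearMap.BilinForm.toMatrix_apply, hB]]
  simp [diamondForm, Matrix.det_succ_row_zero, Fin.sum_univ_succ, Fin.succAbove]

lemma diamond_lieInvariant (hB : ∀ i j, B (b i) (b j) = diamondForm i j)
    (hbr : ∀ i j, ⁅b i, b j⁆ = diamondBracket b i j) : B.lieInvariant g := by
  refine LinearMap.BilinForm.lieInvariant_of_basis b fun i j k => ?_
  fin_cases i <;> fin_cases j <;> fin_cases k <;> simp [hbr, hB, diamondForm, diamondBracket]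

lemma diamond_derivation_eq_lie (hB : ∀ i j, B (b i) (b j) = diamondForm i j)
    (hbr : ∀ i j, ⁅b i, b j⁆ = diamondBracket b i j) {D : g →ₗ[ℂ] g}
    (hder : ∀ x y : g, D ⁅x, y⁆ = ⁅D x, y⁆ + ⁅x, D y⁆)
    (hskew : ∀ x y : g, B (D x) y = -(B x (D y))) : ∃ w₀ : g, ∀ x, D x = ⁅w₀, x⁆ := by
  have hinv := diamond_lieInvariant hB hbr
  have hanti (x y : g) : B (D x) y = -B (D y) x := by rw [hskew, (diamond_isSymm hB).eq]
  have hdiag (x : g) : B (D x) x = 0 := self_eq_neg.mp (hanti x x)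
  have hcocycle := hinv.apply_derivation_lie hder
  have hXZ : B (D (b 0)) (b 3) = 0 := by
    simpa [hbr, diamondBracket] using hcocycle (b 0) (b 1) (b 2)
  have hPZ : B (D (b 1)) (b 3) = 0 := by
    simpa [hbr, diamondBracket] using hcocycle (b 0) (b 1) (b 3)
  have hQZ : B (D (b 2)) (b 3) = 0 := by
    simpa [hbr, diamondBracket] using hcocycle (b 0) (b 2) (b 3)
  set w₀ := B (D (b 1)) (b 2) • b 0 - B (D (b 0)) (b 2) • b 1 + B (D (b 0)) (b 1) • b 2
  refine ⟨w₀, hinv.eq_lie_of_basis (diamond_nondegenerate hB) b fun i j => ?_⟩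
  -- entries below the diagonal follow from those above it, both sides being alternating in `(i, j)`
  fin_cases i <;> fin_cases j <;>
    first
    | simp [w₀, hbr, hB, diamondForm, diamondBracket, hdiag, hXZ, hPZ, hQZ]; done
    | rw [hanti]; simp [w₀, hbr, hB, diamondForm, diamondBracket, hXZ, hPZ, hQZ]

end Diamond

theorem diamond_double_extension_decomposable_general (g : Type) [LieRing g] [LieAlgebra ℂ g]
    (B : LinearMap.BilinForm ℂ g)
    (b : Module.Basis (Fin 4) ℂ g)
    (hB : ∀ i j, B (b i) (b j) =
      ![![0, 0, 0, 1],
        ![0, 0, 1, 0],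
        ![0, 1, 0, 0],
        ![1, 0, 0, 0]] i j)
    (hbr : ∀ i j, ⁅b i, b j⁆ =
      ![![0, b 1, -(b 2), 0],
        ![-(b 1), 0, b 3, 0],
        ![b 2, -(b 3), 0, 0],
        ![(0 : g), 0, 0, 0]] i j)
    (D : g →ₗ[ℂ] g)
    (hder : ∀ x y : g, D ⁅x, y⁆ = ⁅D x, y⁆ + ⁅x, D y⁆)
    (hskew : ∀ x y : g, B (D x) y = -(B x (D y))) :
    (∃ u v : g × ℂ × ℂ,
      (∀ w : g × ℂ × ℂ, deBracket g B D u w = 0 ∧ deBracket g B D w u = 0) ∧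
      (∀ w : g × ℂ × ℂ, deBracket g B D v w = 0 ∧ deBracket g B D w v = 0) ∧
      deForm g B u v ≠ 0) ∧
    (∃ I J : Submodule ℂ (g × ℂ × ℂ),
      I ≠ ⊥ ∧ J ≠ ⊥ ∧
      (∀ w : g × ℂ × ℂ, ∀ x ∈ I, deBracket g B D w x ∈ I) ∧
      (∀ w : g × ℂ × ℂ, ∀ x ∈ J, deBracket g B D w x ∈ J) ∧
      (∀ x ∈ I, ∀ y ∈ J, deForm g B x y = 0) ∧
      I ⊓ J = ⊥ ∧ I ⊔ J = ⊤) := by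
  have : Nontrivial g := ⟨b 0, 0, b.ne_zero 0⟩
  obtain ⟨w₀, hD⟩ := diamond_derivation_eq_lie hB hbr hder hskew
  exact deBracket_decomposable_of_inner (diamond_lieInvariant hB hbr) hD

/-- **Any double extension of the diamond Lie algebra is decomposable.**
Let `g₄` be the diamond Lie algebra (basis `b 0 = X`, `b 1 = P`, `b 2 = Q`, `b 3 = Z`,
brackets `[X,P] = P`, `[X,Q] = -Q`, `[P,Q] = Z`, form `B(X,Z) = B(P,Q) = 1`, other
values on basis pairs zero), let `D` be a skew-symmetric derivation of `g₄`, and let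
`ḡ = g₄ ⊕ ℂe ⊕ ℂf` be the double extension of `g₄` by `D`.  Then the center of `ḡ` is
not totally isotropic for `B̄` (there are central elements `u`, `v` with `B̄(u,v) ≠ 0`),
and `ḡ` is the orthogonal direct sum of two nonzero ideals. -/
theorem diamond_double_extension_decomposable (g : Type) [LieRing g] [LieAlgebra ℂ g]
    [FiniteDimensional ℂ g]
    (B : LinearMap.BilinForm ℂ g)
    (b : Module.Basis (Fin 4) ℂ g)
    (hB : ∀ i j, B (b i) (b j) =
      ![![0, 0, 0, 1],
        ![0, 0, 1, 0],
        ![0, 1, 0, 0],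
        ![1, 0, 0, 0]] i j)
    (hbr : ∀ i j, ⁅b i, b j⁆ =
      ![![0, b 1, -(b 2), 0],
        ![-(b 1), 0, b 3, 0],
        ![b 2, -(b 3), 0, 0],
        ![(0 : g), 0, 0, 0]] i j)
    (D : g →ₗ[ℂ] g)
    (hder : ∀ x y : g, D ⁅x, y⁆ = ⁅D x, y⁆ + ⁅x, D y⁆)
    (hskew : ∀ x y : g, B (D x) y = -(B x (D y))) :
    (∃ u v : g × ℂ × ℂ,
      (∀ w : g × ℂ × ℂ, deBracket g B D u w = 0 ∧ deBracket g B D w u = 0) ∧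
      (∀ w : g × ℂ × ℂ, deBracket g B D v w = 0 ∧ deBracket g B D w v = 0) ∧
      deForm g B u v ≠ 0) ∧
    (∃ I J : Submodule ℂ (g × ℂ × ℂ),
      I ≠ ⊥ ∧ J ≠ ⊥ ∧
      (∀ w : g × ℂ × ℂ, ∀ x ∈ I, deBracket g B D w x ∈ I) ∧
      (∀ w : g × ℂ × ℂ, ∀ x ∈ J, deBracket g B D w x ∈ J) ∧
      (∀ x ∈ I, ∀ y ∈ J, deForm g B x y = 0) ∧
      I ⊓ J = ⊥ ∧ I ⊔ J = ⊤) :=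
  diamond_double_extension_decomposable_general g B b hB hbr D hder hskew
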